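/- arXiv:1606.07920 — 3 statements merged into one kernel-verified Lean document; each statement's English description precedes it below -/
import Mathlib

section
/- Let F = (F₁,…,F_d) ∈ H(E)^d, μ ∈ M(E), and fix a multi-index m = (m₁,…,m_d) ∈ ℕ^d. Set F̄ := (F₁, zF₁, …, z^{m₁−1}F₁, F₂, …, z^{m_d−1}F_d) = (f₁,…,f_{|m|}) ∈ H(E)^{|m|} and m̄ := (1,1,…,1) ∈ ℕ^{|m|}, so |m̄| = |m|. Then: (i) F is polynomially independent with respect to m if and only if F̄ is polynomially independent with respect to m̄; (ii) the poles of F and their orders coincide with the poles of F̄ and their orders; (iii) ρ_m(F) = ρ_m(F̄) for every integer m ≥ 0; (iv) a monic polynomial Q is a denominator of an (n,m) orthogonal Hermite–Padé approximant of F with respect to μ if and only if it is a denominator of an (n,m̄) orthogonal Hermite–Padé approximant of F̄ with respect to μ; (v) the system poles of F with respect to m and their orders coincide with the system poles of F̄ with respect to m̄ and their orders. -/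
open Complex MeasureTheory Polynomial Set Filter Topology
open scoped ENNReal

noncomputable section

/-- The inner product `⟨g,h⟩_μ = ∫ g · conj h dμ`. -/
def mInner (μ : Measure ℂ) (g h : ℂ → ℂ) : ℂ :=
  ∫ ζ, g ζ * (starRingEnd ℂ) (h ζ) ∂μ

/-- The support of a Borel measure on ℂ. -/
def measSupport (μ : Measure ℂ) : Set ℂ :=
  {z | ∀ U ∈ 𝓝 z, μ U ≠ 0}

/-- `μ ∈ M(E)`: a finite positive Borel measure with infinite support contained in `E`. -/
def MeasClass (E : Set ℂ) (μ : Measure ℂ) : Prop :=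
  IsFiniteMeasure μ ∧ measSupport μ ⊆ E ∧ (measSupport μ).Infinite

/-- `p` is the sequence of orthonormal polynomials of `μ` (degree `n`, positive
leading coefficient, orthonormal). -/
def IsONPolys (μ : Measure ℂ) (p : ℕ → Polynomial ℂ) : Prop :=
  (∀ n, (p n).natDegree = n) ∧
  (∀ n, ∃ κ : ℝ, 0 < κ ∧ (p n).leadingCoeff = (κ : ℂ)) ∧
  (∀ n₁ n₂, mInner μ (fun z => (p n₁).eval z) (fun z => (p n₂).eval z)
      = if n₁ = n₂ then 1 else 0)

/-- The second type functions `s_n(z) = ∫ conj(p_n(ζ))/(z-ζ) dμ(ζ)`. -/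
def sFun (μ : Measure ℂ) (p : ℕ → Polynomial ℂ) (n : ℕ) (z : ℂ) : ℂ :=
  ∫ ζ, (starRingEnd ℂ) ((p n).eval ζ) / (z - ζ) ∂μ

/-- `Φ` is the exterior conformal map of `E` : a holomorphic bijection of `ℂ∖E` onto
the exterior of the closed unit disk with `Φ(z)/z → c > 0` at infinity. -/
def IsExtConfMap (E : Set ℂ) (Φ : ℂ → ℂ) : Prop :=
  DifferentiableOn ℂ Φ Eᶜ ∧
  Set.BijOn Φ Eᶜ {w : ℂ | 1 < ‖w‖} ∧
  ∃ c : ℝ, 0 < c ∧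
    Filter.Tendsto (fun z => Φ z / z) (Bornology.cobounded ℂ) (𝓝 (c : ℂ))

/-- The canonical domain of (extended real) index `r` :
`D_r = E ∪ {z ∉ E : |Φ(z)| < r}`. -/
def Dcan (E : Set ℂ) (Φ : ℂ → ℂ) (r : ℝ≥0∞) : Set ℂ :=
  E ∪ {z | z ∉ E ∧ ENNReal.ofReal (‖Φ z‖) < r}

/-- The level curve `Γ_ρ = {z : |Φ(z)| = ρ}`. -/
def levCurve (E : Set ℂ) (Φ : ℂ → ℂ) (ρ : ℝ) : Set ℂ :=
  {z | z ∉ E ∧ ‖Φ z‖ = ρ}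

/-- `f ∈ H(E)` : `f` is holomorphic on some open neighborhood of `E`. -/
def HoloNhd (E : Set ℂ) (f : ℂ → ℂ) : Prop :=
  ∃ U, IsOpen U ∧ E ⊆ U ∧ DifferentiableOn ℂ f U

/-- `f` and `g` agree on some open neighborhood of `E`. -/
def AgreesNear (E : Set ℂ) (f g : ℂ → ℂ) : Prop :=
  ∃ U, IsOpen U ∧ E ⊆ U ∧ Set.EqOn f g U

/-- `f` (holomorphic near `E`) admits a holomorphic extension to the set `D`. -/
def ExtHolo (E : Set ℂ) (f : ℂ → ℂ) (D : Set ℂ) : Prop :=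
  ∃ g, DifferentiableOn ℂ g D ∧ AgreesNear E f g

/-- `f` extends to `D_ρ` meromorphically with at most `m` poles counting
multiplicities (i.e. some monic polynomial `q` of degree `≤ m` kills the poles). -/
def MeroExtTo (E : Set ℂ) (Φ : ℂ → ℂ) (f : ℂ → ℂ) (m : ℕ) (ρ : ℝ) : Prop :=
  ∃ q : Polynomial ℂ, q.Monic ∧ q.natDegree ≤ m ∧
    ExtHolo E (fun z => q.eval z * f z) (Dcan E Φ (ENNReal.ofReal ρ))

/-- `ρ_m(f)` : the index of the largest canonical domain to which `f` extends
meromorphically with at most `m` poles. -/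
def rhoM (E : Set ℂ) (Φ : ℂ → ℂ) (f : ℂ → ℂ) (m : ℕ) : ℝ≥0∞ :=
  sSup {r | ∃ ρ : ℝ, 1 < ρ ∧ r = ENNReal.ofReal ρ ∧ MeroExtTo E Φ f m ρ}

/-- `ρ_0(f)`. -/
def rho0 (E : Set ℂ) (Φ : ℂ → ℂ) (f : ℂ → ℂ) : ℝ≥0∞ := rhoM E Φ f 0

/-- `μ ∈ Reg₁(E)` : `|p_n(z)|^{1/n} → |Φ(z)|` uniformly on compact subsets of `ℂ∖E`. -/
def Reg1 (E : Set ℂ) (Φ : ℂ → ℂ) (μ : Measure ℂ) (p : ℕ → Polynomial ℂ) : Prop :=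
  ∀ K : Set ℂ, IsCompact K → K ⊆ Eᶜ →
    TendstoUniformlyOn (fun n z => ‖(p n).eval z‖ ^ (1 / (n : ℝ)))
      (fun z => ‖Φ z‖) Filter.atTop K

/-- `μ ∈ Reg₂(E)` : `|s_n(z)|^{1/n} → |Φ(z)|⁻¹` uniformly on compact subsets of `ℂ∖E`. -/
def Reg2 (E : Set ℂ) (Φ : ℂ → ℂ) (μ : Measure ℂ) (p : ℕ → Polynomial ℂ) : Prop :=
  ∀ K : Set ℂ, IsCompact K → K ⊆ Eᶜ →
    TendstoUniformlyOn (fun n z => ‖sFun μ p n z‖ ^ (1 / (n : ℝ)))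
      (fun z => (‖Φ z‖)⁻¹) Filter.atTop K

/-- `μ ∈ Reg_{1,2}(E)`. -/
def Reg12 (E : Set ℂ) (Φ : ℂ → ℂ) (μ : Measure ℂ) (p : ℕ → Polynomial ℂ) : Prop :=
  Reg1 E Φ μ p ∧ Reg2 E Φ μ p

/-- `μ ∈ Reg_{1,2}^m(E)` : additionally `κ_{n-m}/κ_n ≥ c > 0` for all large `n`. -/
def Reg12m (E : Set ℂ) (Φ : ℂ → ℂ) (μ : Measure ℂ) (p : ℕ → Polynomial ℂ) (m : ℕ) : Prop :=
  Reg12 E Φ μ p ∧ ∃ c : ℝ, 0 < c ∧ ∃ n₀ : ℕ, ∀ n ≥ n₀,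
    c ≤ ‖(p (n - m)).leadingCoeff‖ / ‖(p n).leadingCoeff‖

/-- A denominator of an `(n,m)` orthogonal Hermite–Padé approximant of the system `F`. -/
def IsHPDenom {ι : Type*} [Fintype ι] (μ : Measure ℂ) (p : ℕ → Polynomial ℂ)
    (F : ι → ℂ → ℂ) (m : ι → ℕ) (n : ℕ) (Q : Polynomial ℂ) : Prop :=
  Q.Monic ∧ Q.natDegree ≤ ∑ i, m i ∧
  ∀ i, ∀ k < m i,
    mInner μ (fun z => Q.eval z * z ^ k * F i z) (fun z => (p n).eval z) = 0

/-- The numerator `P^μ_{n,m,k,i}` associated to a denominator `Q`. -/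
def IsHPNum (μ : Measure ℂ) (p : ℕ → Polynomial ℂ) (Q : Polynomial ℂ) (f : ℂ → ℂ)
    (k n : ℕ) (P : Polynomial ℂ) : Prop :=
  P.degree < (n : WithBot ℕ) ∧
  ∀ j ≤ n, mInner μ (fun z => Q.eval z * z ^ k * f z - P.eval z)
      (fun z => (p j).eval z) = 0

/-- A denominator of an `(n,m,m*)` incomplete orthogonal Padé approximant of `f`. -/
def IsIncDenom (μ : Measure ℂ) (p : ℕ → Polynomial ℂ) (f : ℂ → ℂ)
    (m mstar n : ℕ) (Q : Polynomial ℂ) : Prop :=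
  Q.Monic ∧ Q.natDegree ≤ m ∧
  ∀ k < mstar, mInner μ (fun z => Q.eval z * z ^ k * f z) (fun z => (p n).eval z) = 0

/-- The coefficient norm `‖∑ a_k z^k‖ = ∑ |a_k|` of a polynomial. -/
def coeffNorm (Q : Polynomial ℂ) : ℝ :=
  ∑ k ∈ Finset.range (Q.natDegree + 1), ‖Q.coeff k‖

/-- `limsup_n a_n^{1/n}` computed in `ℝ≥0∞`. -/
def limsupRoot (a : ℕ → ℝ) : ℝ≥0∞ :=
  Filter.limsup (fun n => ENNReal.ofReal (a n ^ (1 / (n : ℝ)))) Filter.atTop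

/-- The sup norm of `f` on `K`. -/
def supNorm (f : ℂ → ℂ) (K : Set ℂ) : ℝ :=
  sSup ((fun z => ‖f z‖) '' K)

-- `‖Φ‖_K`, replaced by `1` when `K ⊆ E`.
open scoped Classical in
def phiNormK (E : Set ℂ) (Φ : ℂ → ℂ) (K : Set ℂ) : ℝ :=
  if K ⊆ E then 1 else supNorm Φ K

/-- `g` has a pole of exact order `t` at `ξ`. -/
def IsPoleOrd (g : ℂ → ℂ) (ξ : ℂ) (t : ℕ) : Prop :=
  ∃ h : ℂ → ℂ, (∃ V, IsOpen V ∧ ξ ∈ V ∧ DifferentiableOn ℂ h V) ∧ h ξ ≠ 0 ∧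
    ∀ᶠ z in 𝓝[≠] ξ, g z = h z / (z - ξ) ^ t

/-- `g` is holomorphic on a neighborhood of the closure of `D_{|Φ(ξ)|}` except for a
pole at `ξ` of exact order `t`. -/
def HoloExceptPole (E : Set ℂ) (Φ : ℂ → ℂ) (g : ℂ → ℂ) (ξ : ℂ) (t : ℕ) : Prop :=
  ∃ U, IsOpen U ∧ closure (Dcan E Φ (ENNReal.ofReal (‖Φ ξ‖))) ⊆ U ∧
    DifferentiableOn ℂ g (U \ {ξ}) ∧ IsPoleOrd g ξ t

/-- `g` extends a polynomial combination `∑ vᵢ Fᵢ`, `deg vᵢ < mᵢ`, of the system `F`. -/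
def IsCombExt {ι : Type*} [Fintype ι] (E : Set ℂ) (F : ι → ℂ → ℂ) (m : ι → ℕ)
    (g : ℂ → ℂ) : Prop :=
  ∃ v : ι → Polynomial ℂ, (∀ i, (v i).degree < (m i : WithBot ℕ)) ∧
    AgreesNear E (fun z => ∑ i, (v i).eval z * F i z) g

/-- For each `t = 1,…,τ` there is a polynomial combination with a pole of exact order
`t` at `ξ`, holomorphic elsewhere on a neighborhood of `closure D_{|Φ(ξ)|}`. -/
def SysAll {ι : Type*} [Fintype ι] (E : Set ℂ) (Φ : ℂ → ℂ) (F : ι → ℂ → ℂ)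
    (m : ι → ℕ) (ξ : ℂ) (τ : ℕ) : Prop :=
  ∀ t, 1 ≤ t → t ≤ τ → ∃ g, IsCombExt E F m g ∧ HoloExceptPole E Φ g ξ t

/-- `ξ` is a system pole of order `τ` of `F` with respect to `m`. -/
def IsSystemPoleOrd {ι : Type*} [Fintype ι] (E : Set ℂ) (Φ : ℂ → ℂ) (F : ι → ℂ → ℂ)
    (m : ι → ℕ) (ξ : ℂ) (τ : ℕ) : Prop :=
  0 < τ ∧ SysAll E Φ F m ξ τ ∧ ¬ SysAll E Φ F m ξ (τ + 1)

/-- `S` is the set of system poles of `F` w.r.t. `m` and `ord` gives their orders. -/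
def SystemPoleData {ι : Type*} [Fintype ι] (E : Set ℂ) (Φ : ℂ → ℂ) (F : ι → ℂ → ℂ)
    (m : ι → ℕ) (S : Finset ℂ) (ord : ℂ → ℕ) : Prop :=
  (∀ ξ, ξ ∈ S ↔ ∃ τ, IsSystemPoleOrd E Φ F m ξ τ) ∧
  ∀ ξ ∈ S, IsSystemPoleOrd E Φ F m ξ (ord ξ)

/-- `F` has exactly `k` system poles with respect to `m`, counting multiplicities. -/
def HasExactlySysPoles {ι : Type*} [Fintype ι] (E : Set ℂ) (Φ : ℂ → ℂ) (F : ι → ℂ → ℂ)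
    (m : ι → ℕ) (k : ℕ) : Prop :=
  ∃ S ord, SystemPoleData E Φ F m S ord ∧ ∑ ξ ∈ S, ord ξ = k

/-- `ρ_{ξ,t}(F,m)` : the largest of the numbers `ρ_t(g)` over polynomial combinations
`g` with a pole of exact order `t` at `ξ`. -/
def rhoXiT {ι : Type*} [Fintype ι] (E : Set ℂ) (Φ : ℂ → ℂ) (F : ι → ℂ → ℂ)
    (m : ι → ℕ) (ξ : ℂ) (t : ℕ) : ℝ≥0∞ :=
  sSup {r | ∃ g, IsCombExt E F m g ∧ HoloExceptPole E Φ g ξ t ∧ r = rhoM E Φ g t}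

/-- `𝛒_{ξ,t}(F,m) = min_{k=1,…,t} ρ_{ξ,k}(F,m)`. -/
def rhoBold {ι : Type*} [Fintype ι] (E : Set ℂ) (Φ : ℂ → ℂ) (F : ι → ℂ → ℂ)
    (m : ι → ℕ) (ξ : ℂ) (t : ℕ) : ℝ≥0∞ :=
  ⨅ k ∈ Finset.Icc 1 t, rhoXiT E Φ F m ξ k

/-- Meromorphic data for `f` on `D_r` : poles `P` with orders `po`, holomorphic `H`
with `(∏_{ξ∈P}(z-ξ)^{po ξ}) f = H` and `H ξ ≠ 0` at each pole (exact orders). -/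
def MeroDataOn (E : Set ℂ) (Φ : ℂ → ℂ) (f : ℂ → ℂ) (r : ℝ≥0∞)
    (P : Finset ℂ) (po : ℂ → ℕ) (H : ℂ → ℂ) : Prop :=
  ↑P ⊆ Dcan E Φ r \ E ∧ (∀ ξ ∈ P, 0 < po ξ) ∧
  DifferentiableOn ℂ H (Dcan E Φ r) ∧ (∀ ξ ∈ P, H ξ ≠ 0) ∧
  AgreesNear E (fun z => (∏ ξ ∈ P, (z - ξ) ^ po ξ) * f z) H

/-- `ξ` is a pole of exact order `t` of the meromorphic continuation of `f`. -/
def IsPoleOfExt (E : Set ℂ) (Φ : ℂ → ℂ) (f : ℂ → ℂ) (ξ : ℂ) (t : ℕ) : Prop :=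
  ∃ ρ : ℝ, 1 < ρ ∧ ∃ P po H, MeroDataOn E Φ f (ENNReal.ofReal ρ) P po H ∧ ξ ∈ P ∧ po ξ = t

/-- The canonical domain of index `ρ` is one where all poles of `z^k Fᵢ` are system
poles whose order as poles does not exceed their order as system poles, and `z^k Fᵢ`
has no other singularities. -/
def GoodIdx {ι : Type*} [Fintype ι] (E : Set ℂ) (Φ : ℂ → ℂ) (F : ι → ℂ → ℂ)
    (m : ι → ℕ) (i : ι) (k : ℕ) (ρ : ℝ) : Prop :=
  ∃ P po H, MeroDataOn E Φ (fun z => z ^ k * F i z) (ENNReal.ofReal ρ) P po H ∧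
    ∀ ξ ∈ P, ∃ τ, IsSystemPoleOrd E Φ F m ξ τ ∧ po ξ ≤ τ

/-- `ρ_{i,k}(F,m)`. -/
def rhoIK {ι : Type*} [Fintype ι] (E : Set ℂ) (Φ : ℂ → ℂ) (F : ι → ℂ → ℂ)
    (m : ι → ℕ) (i : ι) (k : ℕ) : ℝ≥0∞ :=
  sSup {r | ∃ ρ : ℝ, 1 < ρ ∧ r = ENNReal.ofReal ρ ∧ GoodIdx E Φ F m i k ρ}

/-- The meromorphic extension of `f` to `D_{ρ_k(f)}` has exactly `k` poles counting
multiplicities (the minimal degree of a monic denominator is `k`). -/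
def ExactPoles (E : Set ℂ) (Φ : ℂ → ℂ) (f : ℂ → ℂ) (k : ℕ) : Prop :=
  (∃ q : Polynomial ℂ, q.Monic ∧ q.natDegree = k ∧
    ExtHolo E (fun z => q.eval z * f z) (Dcan E Φ (rhoM E Φ f k))) ∧
  ∀ q : Polynomial ℂ, q.Monic →
    ExtHolo E (fun z => q.eval z * f z) (Dcan E Φ (rhoM E Φ f k)) → k ≤ q.natDegree

/-- `F` is polynomially independent with respect to `m`. -/
def PolyIndep {ι : Type*} [Fintype ι] (E : Set ℂ) (F : ι → ℂ → ℂ) (m : ι → ℕ) : Prop :=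
  ¬ ∃ v : ι → Polynomial ℂ, (∀ i, (v i).degree < (m i : WithBot ℕ)) ∧ (∃ i, v i ≠ 0) ∧
    ∃ q : Polynomial ℂ, AgreesNear E (fun z => ∑ i, (v i).eval z * F i z)
      (fun z => q.eval z)

/-- `ξ` is a pole of the vector `G` of order `τ` (the largest order among components). -/
def VecPoleOrd {ι : Type*} [Fintype ι] (E : Set ℂ) (Φ : ℂ → ℂ) (G : ι → ℂ → ℂ)
    (ξ : ℂ) (τ : ℕ) : Prop :=
  (∃ i, IsPoleOfExt E Φ (G i) ξ τ) ∧ ∀ i t, IsPoleOfExt E Φ (G i) ξ t → t ≤ τ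

/-- The vector `G` extends meromorphically to `D_ρ` with at most `k` poles counting
multiplicities (common monic denominator of degree `≤ k`). -/
def VecMeroExtTo {ι : Type*} [Fintype ι] (E : Set ℂ) (Φ : ℂ → ℂ) (G : ι → ℂ → ℂ)
    (k : ℕ) (ρ : ℝ) : Prop :=
  ∃ q : Polynomial ℂ, q.Monic ∧ q.natDegree ≤ k ∧
    ∀ i, ExtHolo E (fun z => q.eval z * G i z) (Dcan E Φ (ENNReal.ofReal ρ))

/-- `ρ_k(G)` for a vector `G`. -/
def vecRhoM {ι : Type*} [Fintype ι] (E : Set ℂ) (Φ : ℂ → ℂ) (G : ι → ℂ → ℂ)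
    (k : ℕ) : ℝ≥0∞ :=
  sSup {r | ∃ ρ : ℝ, 1 < ρ ∧ r = ENNReal.ofReal ρ ∧ VecMeroExtTo E Φ G k ρ}

/-!
A combination `∑ vᵢ Fᵢ` with `deg vᵢ < mᵢ` is the same thing as a combination of the functions
`z ^ k * Fᵢ`, `k < mᵢ`, with constant coefficients (the coefficient of `z ^ k * Fᵢ` being the
`k`-th coefficient of `vᵢ`); this gives the statements on polynomial independence and on system
poles, while the orthogonality conditions of the two approximation problems are literally the
same. For poles and `ρ_k`, `Fᵢ` is itself the component `k = 0` of `F̄`, and multiplying by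
`z ^ k` can only lower the order of a pole: dividing meromorphic data of `(z - a) * f` by `z - a`
raises the order of the pole at `a`, removes a zero of the holomorphic part (`dslope`), or
creates a new simple pole at `a`, and never lowers the order of an existing pole.
-/

section Meromorphic

variable {E : Set ℂ} {Φ : ℂ → ℂ} {f : ℂ → ℂ} {r : ℝ≥0∞} {P : Finset ℂ} {po : ℂ → ℕ}
  {H : ℂ → ℂ}

lemma HoloNhd.mul {g : ℂ → ℂ} (hf : HoloNhd E f) (hg : Differentiable ℂ g) :
    HoloNhd E (fun z => g z * f z) := by
  obtain ⟨U, hU, hEU, hfU⟩ := hf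
  exact ⟨U, hU, hEU, hg.differentiableOn.mul hfU⟩

lemma isOpen_dcan_diff (hE : IsClosed E) (hΦ : ContinuousOn Φ Eᶜ) (r : ℝ≥0∞) :
    IsOpen (Dcan E Φ r \ E) := by
  have h : Dcan E Φ r \ E = Eᶜ ∩ (fun z => ENNReal.ofReal ‖Φ z‖) ⁻¹' Iio r := by
    ext z
    simp only [Dcan, Set.mem_sdiff, mem_union, mem_ofPred_eq, mem_inter_iff, mem_compl_iff,
      mem_preimage, mem_Iio]
    tauto
  rw [h]
  exact (ENNReal.continuous_ofReal.comp_continuousOn hΦ.norm).isOpen_inter_preimage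
    hE.isOpen_compl isOpen_Iio

lemma prod_insert_sub_pow_update (z a : ℂ) {s : Finset ℂ} (ha : a ∉ s) (po : ℂ → ℕ) (n : ℕ) :
    ∏ ζ ∈ insert a s, (z - ζ) ^ Function.update po a n ζ
      = (z - a) ^ n * ∏ ζ ∈ s, (z - ζ) ^ po ζ := by
  rw [Finset.prod_insert ha, Function.update_self]
  congr 1
  exact Finset.prod_congr rfl fun ζ hζ => by
    rw [Function.update_of_ne (ne_of_mem_of_not_mem hζ ha)]

lemma MeroDataOn.exists_nhds_differentiableOn (hE : IsClosed E) (hΦ : ContinuousOn Φ Eᶜ)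
    (hf : HoloNhd E f) (h : MeroDataOn E Φ f r P po H) {z : ℂ} (hz : z ∈ Dcan E Φ r) :
    ∃ V ∈ 𝓝 z, DifferentiableOn ℂ H V := by
  obtain ⟨-, -, hH, -, U, hU, hEU, heq⟩ := h
  by_cases hzE : z ∈ E
  · obtain ⟨W, hW, hEW, hfW⟩ := hf
    refine ⟨U ∩ W, (hU.inter hW).mem_nhds ⟨hEU hzE, hEW hzE⟩, ?_⟩
    have hprod : DifferentiableOn ℂ (fun z => ∏ ζ ∈ P, (z - ζ) ^ po ζ) (U ∩ W) := by fun_prop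
    exact (hprod.mul (hfW.mono inter_subset_right)).congr fun w hw => (heq hw.1).symm
  · exact ⟨Dcan E Φ r \ E, (isOpen_dcan_diff hE hΦ r).mem_nhds ⟨hz, hzE⟩, hH.mono sdiff_subset⟩

variable {a : ℂ}

lemma MeroDataOn.of_sub_mul_of_mem (h : MeroDataOn E Φ (fun z => (z - a) * f z) r P po H)
    (ha : a ∈ P) : MeroDataOn E Φ f r P (Function.update po a (po a + 1)) H := by
  obtain ⟨hPD, hpo, hH, hHne, U, hU, hEU, heq⟩ := h
  refine ⟨hPD, fun ζ hζ => ?_, hH, hHne, U, hU, hEU, fun z hz => ?_⟩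
  · rcases eq_or_ne ζ a with rfl | hζa
    · simp
    · simpa [hζa] using hpo ζ hζ
  · have hP : P = insert a (P.erase a) := (Finset.insert_erase ha).symm
    have hpo' : ∏ ζ ∈ P, (z - ζ) ^ po ζ = (z - a) ^ po a * ∏ ζ ∈ P.erase a, (z - ζ) ^ po ζ := by
      conv_lhs => rw [hP, ← Function.update_eq_self a po]
      exact prod_insert_sub_pow_update z a (Finset.notMem_erase a P) po _
    rw [← heq hz]
    simp only
    rw [hP, prod_insert_sub_pow_update z a (Finset.notMem_erase a P), ← hP, hpo']
    ring

lemma MeroDataOn.of_sub_mul_of_notMem_dcan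
    (h : MeroDataOn E Φ (fun z => (z - a) * f z) r P po H) (ha : a ∉ Dcan E Φ r) :
    MeroDataOn E Φ f r P po (fun z => H z / (z - a)) := by
  obtain ⟨hPD, hpo, hH, hHne, U, hU, hEU, heq⟩ := h
  have hne : ∀ z ∈ Dcan E Φ r, z - a ≠ 0 := fun z hz =>
    sub_ne_zero.mpr (ne_of_mem_of_not_mem hz ha)
  refine ⟨hPD, hpo, fun z hz => (hH z hz).div (by fun_prop) (hne z hz),
    fun ζ hζ => div_ne_zero (hHne ζ hζ) (hne ζ (hPD hζ).1), U \ {a}, hU.sdiff isClosed_singleton,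
    fun z hz => ⟨hEU hz, fun hza => ha (hza ▸ subset_union_left hz)⟩, fun z hz => ?_⟩
  have hza : z - a ≠ 0 := sub_ne_zero.mpr hz.2
  simp only
  rw [eq_div_iff hza, ← heq hz.1]
  ring

lemma MeroDataOn.of_sub_mul_of_apply_eq_zero (hf : HoloNhd E f)
    (h : MeroDataOn E Φ (fun z => (z - a) * f z) r P po H) (haP : a ∉ P) (hHa : H a = 0)
    {V : Set ℂ} (hV : V ∈ 𝓝 a) (hHV : DifferentiableOn ℂ H V) :
    MeroDataOn E Φ f r P po (dslope H a) := by
  obtain ⟨hPD, hpo, hH, hHne, U, hU, hEU, heq⟩ := h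
  obtain ⟨W, hW, hEW, hfW⟩ := hf
  have hslope : ∀ z ≠ a, dslope H a z = H z / (z - a) := fun z hz => by
    rw [dslope_of_ne _ hz, slope_def_field, hHa, sub_zero]
  refine ⟨hPD, hpo, fun z hz => ?_, fun ζ hζ => ?_, U ∩ W, hU.inter hW,
    subset_inter hEU hEW, fun z hz => ?_⟩
  · rcases eq_or_ne z a with rfl | hza
    · exact (((differentiableOn_dslope hV).mpr hHV).differentiableAt hV).differentiableWithinAt
    · exact (differentiableWithinAt_dslope_of_ne hza).mpr (hH z hz)
  · have hζa : ζ ≠ a := ne_of_mem_of_not_mem hζ haP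
    rw [hslope ζ hζa]
    exact div_ne_zero (hHne ζ hζ) (sub_ne_zero.mpr hζa)
  · set g : ℂ → ℂ := fun z => (∏ ζ ∈ P, (z - ζ) ^ po ζ) * f z
    show g z = dslope H a z
    rcases eq_or_ne z a with rfl | hza
    · have hg : DifferentiableAt ℂ g z :=
        (by fun_prop : Differentiable ℂ fun z => ∏ ζ ∈ P, (z - ζ) ^ po ζ).differentiableAt.mul
          (hfW.differentiableAt (hW.mem_nhds hz.2))
      have hderiv : HasDerivAt (fun w => (w - z) * g w) (g z) z := by
        simpa using ((hasDerivAt_id z).sub_const z).fun_mul hg.hasDerivAt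
      have hHg : H =ᶠ[𝓝 z] fun w => (w - z) * g w := by
        filter_upwards [hU.mem_nhds hz.1] with w hw
        rw [← heq hw]
        simp only [g]
        ring
      rw [dslope_same, (hderiv.congr_of_eventuallyEq hHg).deriv]
    · rw [hslope z hza, eq_div_iff (sub_ne_zero.mpr hza), ← heq hz.1]
      simp only [g]
      ring

lemma MeroDataOn.of_sub_mul_of_apply_ne_zero
    (h : MeroDataOn E Φ (fun z => (z - a) * f z) r P po H) (haP : a ∉ P)
    (ha : a ∈ Dcan E Φ r \ E) (hHa : H a ≠ 0) :
    MeroDataOn E Φ f r (insert a P) (Function.update po a 1) H := by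
  obtain ⟨hPD, hpo, hH, hHne, U, hU, hEU, heq⟩ := h
  refine ⟨?_, fun ζ hζ => ?_, hH, fun ζ hζ => ?_, U, hU, hEU, fun z hz => ?_⟩
  · rw [Finset.coe_insert]
    exact insert_subset ha hPD
  · rcases eq_or_ne ζ a with rfl | hζa
    · simp
    · simpa [hζa] using hpo ζ (Finset.mem_of_mem_insert_of_ne hζ hζa)
  · rcases eq_or_ne ζ a with rfl | hζa
    · exact hHa
    · exact hHne ζ (Finset.mem_of_mem_insert_of_ne hζ hζa)
  · rw [← heq hz]
    simp only
    rw [prod_insert_sub_pow_update z a haP]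
    ring

lemma MeroDataOn.exists_of_sub_mul (hE : IsClosed E) (hΦ : ContinuousOn Φ Eᶜ)
    (hf : HoloNhd E f) (h : MeroDataOn E Φ (fun z => (z - a) * f z) r P po H) :
    ∃ P' po' H', MeroDataOn E Φ f r P' po' H' ∧ ∀ ζ ∈ P, ζ ∈ P' ∧ po ζ ≤ po' ζ := by
  by_cases haP : a ∈ P
  · refine ⟨P, _, H, h.of_sub_mul_of_mem haP, fun ζ hζ => ⟨hζ, ?_⟩⟩
    rcases eq_or_ne ζ a with rfl | hζa <;> simp [*]
  by_cases haD : a ∉ Dcan E Φ r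
  · exact ⟨P, po, _, h.of_sub_mul_of_notMem_dcan haD, fun ζ hζ => ⟨hζ, le_rfl⟩⟩
  rw [not_not] at haD
  obtain ⟨V, hV, hHV⟩ :=
    h.exists_nhds_differentiableOn hE hΦ (hf.mul (by fun_prop : Differentiable ℂ (· - a))) haD
  by_cases hHa : H a = 0
  · exact ⟨P, po, _, h.of_sub_mul_of_apply_eq_zero hf haP hHa hV hHV, fun ζ hζ => ⟨hζ, le_rfl⟩⟩
  -- on `E` the product `(z - a) * f z` vanishes at `a`, so a new pole can only lie off `E`
  have haE : a ∉ E := fun haE => by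
    obtain ⟨-, -, -, -, U, -, hEU, heq⟩ := h
    exact hHa (by simpa using (heq (hEU haE)).symm)
  refine ⟨insert a P, _, H, h.of_sub_mul_of_apply_ne_zero haP ⟨haD, haE⟩ hHa,
    fun ζ hζ => ⟨Finset.mem_insert_of_mem hζ, ?_⟩⟩
  rw [Function.update_of_ne (ne_of_mem_of_not_mem hζ haP)]

lemma MeroDataOn.exists_of_sub_pow_mul (hE : IsClosed E) (hΦ : ContinuousOn Φ Eᶜ)
    (hf : HoloNhd E f) (k : ℕ) :
    MeroDataOn E Φ (fun z => (z - a) ^ k * f z) r P po H →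
      ∃ P' po' H', MeroDataOn E Φ f r P' po' H' ∧ ∀ ζ ∈ P, ζ ∈ P' ∧ po ζ ≤ po' ζ := by
  induction k generalizing P po H with
  | zero => exact fun h => ⟨P, po, H, by simpa using h, fun ζ hζ => ⟨hζ, le_rfl⟩⟩
  | succ k ih =>
    intro h
    have hsucc :
        (fun z => (z - a) ^ (k + 1) * f z) = fun z => (z - a) * ((z - a) ^ k * f z) := by
      funext z
      ring
    rw [hsucc] at h
    obtain ⟨P₁, po₁, H₁, h₁, hP₁⟩ :=
      h.exists_of_sub_mul hE hΦ (hf.mul (by fun_prop : Differentiable ℂ ((· - a) ^ k)))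
    obtain ⟨P₂, po₂, H₂, h₂, hP₂⟩ := ih h₁
    refine ⟨P₂, po₂, H₂, h₂, fun ζ hζ => ?_⟩
    obtain ⟨hζ₁, hle₁⟩ := hP₁ ζ hζ
    obtain ⟨hζ₂, hle₂⟩ := hP₂ ζ hζ₁
    exact ⟨hζ₂, hle₁.trans hle₂⟩

lemma IsPoleOfExt.exists_le_of_pow_mul (hE : IsClosed E) (hΦ : ContinuousOn Φ Eᶜ)
    (hf : HoloNhd E f) {k : ℕ} {ξ : ℂ} {t : ℕ}
    (h : IsPoleOfExt E Φ (fun z => z ^ k * f z) ξ t) :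
    ∃ t', t ≤ t' ∧ IsPoleOfExt E Φ f ξ t' := by
  obtain ⟨ρ, hρ, P, po, H, hdata, hξ, rfl⟩ := h
  obtain ⟨P', po', H', hdata', hP'⟩ :=
    MeroDataOn.exists_of_sub_pow_mul (a := 0) hE hΦ hf k (by simpa using hdata)
  exact ⟨po' ξ, (hP' ξ hξ).2, ρ, hρ, P', po', H', hdata', (hP' ξ hξ).1, rfl⟩

end Meromorphic

lemma ExtHolo.mul_pow_mul {E D : Set ℂ} {φ f : ℂ → ℂ} (h : ExtHolo E (fun z => φ z * f z) D)
    (j : ℕ) : ExtHolo E (fun z => φ z * (z ^ j * f z)) D := by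
  obtain ⟨g, hg, U, hU, hEU, heq⟩ := h
  refine ⟨fun z => z ^ j * g z, (differentiable_pow j).differentiableOn.mul hg, U, hU, hEU,
    fun z hz => ?_⟩
  have hz' : φ z * f z = g z := heq hz
  simp only [← hz']
  ring

section ExpandSystem

variable {ι : Type*}

def expandSystem (F : ι → ℂ → ℂ) (m : ι → ℕ) : (Σ i, Fin (m i)) → ℂ → ℂ :=
  fun ik z => z ^ (ik.2 : ℕ) * F ik.1 z

lemma expandSystem_zero (F : ι → ℂ → ℂ) (m : ι → ℕ) (i : ι) (hi : 0 < m i) :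
    expandSystem F m ⟨i, ⟨0, hi⟩⟩ = F i := by
  funext z
  simp [expandSystem]

section Coefficients

variable {m : ι → ℕ}

def splitCoeffs (v : ι → ℂ[X]) : (Σ i, Fin (m i)) → ℂ[X] :=
  fun ik => C ((v ik.1).coeff ik.2)

def joinCoeffs (w : (Σ i, Fin (m i)) → ℂ[X]) (i : ι) : ℂ[X] :=
  ∑ k : Fin (m i), C ((w ⟨i, k⟩).coeff 0) * X ^ (k : ℕ)

lemma degree_splitCoeffs_lt (v : ι → ℂ[X]) (ik : Σ i, Fin (m i)) :
    (splitCoeffs v ik).degree < ((1 : ℕ) : WithBot ℕ) :=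
  degree_C_le.trans_lt (by exact_mod_cast zero_lt_one)

lemma degree_joinCoeffs_lt (w : (Σ i, Fin (m i)) → ℂ[X]) (i : ι) :
    (joinCoeffs w i).degree < (m i : WithBot ℕ) :=
  degree_sum_fin_lt _

lemma coeff_joinCoeffs (w : (Σ i, Fin (m i)) → ℂ[X]) (i : ι) (n : ℕ) :
    (joinCoeffs w i).coeff n = if h : n < m i then (w ⟨i, ⟨n, h⟩⟩).coeff 0 else 0 := by
  simp only [joinCoeffs, finsetSum_coeff, coeff_C_mul, coeff_X_pow]
  split_ifs with h
  · rw [Finset.sum_eq_single ⟨n, h⟩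
      (fun k _ hk => by rw [if_neg (fun e => hk (Fin.ext e.symm)), mul_zero]) (by simp)]
    simp
  · exact Finset.sum_eq_zero fun k _ => by rw [if_neg (by omega), mul_zero]

lemma joinCoeffs_splitCoeffs {v : ι → ℂ[X]} (hv : ∀ i, (v i).degree < (m i : WithBot ℕ)) :
    joinCoeffs (splitCoeffs (m := m) v) = v := by
  funext i
  ext n
  rw [coeff_joinCoeffs]
  split_ifs with h
  · simp [splitCoeffs]
  · exact (coeff_eq_zero_of_degree_lt ((hv i).trans_le (by exact_mod_cast not_lt.mp h))).symm

lemma splitCoeffs_joinCoeffs {w : (Σ i, Fin (m i)) → ℂ[X]}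
    (hw : ∀ ik, (w ik).degree < ((1 : ℕ) : WithBot ℕ)) :
    splitCoeffs (joinCoeffs w) = w := by
  funext ⟨i, k⟩
  rw [splitCoeffs, coeff_joinCoeffs, dif_pos k.isLt, eq_comm]
  exact eq_C_of_degree_le_zero (Order.le_of_lt_succ (hw _))

lemma sum_splitCoeffs_mul_expandSystem [Fintype ι] (F : ι → ℂ → ℂ) {v : ι → ℂ[X]}
    (hv : ∀ i, (v i).degree < (m i : WithBot ℕ)) :
    (fun z => ∑ ik, (splitCoeffs v ik).eval z * expandSystem F m ik z)
      = fun z => ∑ i, (v i).eval z * F i z := by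
  funext z
  rw [← Finset.univ_sigma_univ, Finset.sum_sigma]
  refine Finset.sum_congr rfl fun i _ => ?_
  conv_rhs => rw [← joinCoeffs_splitCoeffs hv]
  simp [joinCoeffs, splitCoeffs, expandSystem, eval_finsetSum, Finset.sum_mul, mul_assoc]

end Coefficients

variable [Fintype ι] (E : Set ℂ) (F : ι → ℂ → ℂ) (m : ι → ℕ)

theorem polyIndep_expandSystem_iff :
    PolyIndep E F m ↔ PolyIndep E (expandSystem F m) (fun _ => 1) := by
  refine not_congr ⟨?_, ?_⟩
  · rintro ⟨v, hv, ⟨i, hvi⟩, q, hq⟩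
    refine ⟨splitCoeffs v, degree_splitCoeffs_lt v, ?_, q, ?_⟩
    · by_contra! h0
      apply hvi
      rw [← joinCoeffs_splitCoeffs hv, funext h0]
      simp [joinCoeffs]
    · rwa [sum_splitCoeffs_mul_expandSystem F hv]
  · rintro ⟨w, hw, ⟨ik, hwik⟩, q, hq⟩
    refine ⟨joinCoeffs w, degree_joinCoeffs_lt w, ?_, q, ?_⟩
    · by_contra! h0
      apply hwik
      rw [← splitCoeffs_joinCoeffs hw, funext h0]
      simp [splitCoeffs]
    · rwa [← splitCoeffs_joinCoeffs hw,
        sum_splitCoeffs_mul_expandSystem F (degree_joinCoeffs_lt w)] at hq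

theorem vecPoleOrd_expandSystem_iff {Φ : ℂ → ℂ} (hE : IsClosed E) (hΦ : ContinuousOn Φ Eᶜ)
    (hF : ∀ i, HoloNhd E (F i)) (hm : ∀ i, 1 ≤ m i) (ξ : ℂ) (τ : ℕ) :
    VecPoleOrd E Φ F ξ τ ↔ VecPoleOrd E Φ (expandSystem F m) ξ τ := by
  have hpole : ∀ ik t, IsPoleOfExt E Φ (expandSystem F m ik) ξ t →
      ∃ t', t ≤ t' ∧ IsPoleOfExt E Φ (F ik.1) ξ t' :=
    fun ik _ h => IsPoleOfExt.exists_le_of_pow_mul hE hΦ (hF ik.1) h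
  have hmaxF : (∀ ik t, IsPoleOfExt E Φ (expandSystem F m ik) ξ t → t ≤ τ) →
      ∀ i t, IsPoleOfExt E Φ (F i) ξ t → t ≤ τ := fun hmax i t ht =>
    hmax ⟨i, ⟨0, hm i⟩⟩ t (by rwa [expandSystem_zero])
  constructor
  · rintro ⟨⟨i, hi⟩, hmax⟩
    refine ⟨⟨⟨i, ⟨0, hm i⟩⟩, by rwa [expandSystem_zero]⟩, fun ik t ht => ?_⟩
    obtain ⟨t', htt', ht'⟩ := hpole ik t ht
    exact htt'.trans (hmax _ _ ht')
  · rintro ⟨⟨ik, hik⟩, hmax⟩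
    obtain ⟨t', hτt', ht'⟩ := hpole ik τ hik
    obtain rfl : t' = τ := le_antisymm (hmaxF hmax _ _ ht') hτt'
    exact ⟨⟨ik.1, ht'⟩, hmaxF hmax⟩

theorem vecRhoM_expandSystem (Φ : ℂ → ℂ) (hm : ∀ i, 1 ≤ m i) (k : ℕ) :
    vecRhoM E Φ F k = vecRhoM E Φ (expandSystem F m) k := by
  have hext : ∀ ρ, VecMeroExtTo E Φ F k ρ ↔ VecMeroExtTo E Φ (expandSystem F m) k ρ := by
    refine fun ρ => exists_congr fun q => and_congr_right fun _ => and_congr_right fun _ => ?_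
    exact ⟨fun h ik => (h ik.1).mul_pow_mul ik.2,
      fun h i => by simpa [expandSystem_zero] using h ⟨i, ⟨0, hm i⟩⟩⟩
  simp only [vecRhoM, hext]

theorem isHPDenom_expandSystem_iff (μ : Measure ℂ) (p : ℕ → ℂ[X]) (n : ℕ) (Q : ℂ[X]) :
    IsHPDenom μ p F m n Q ↔ IsHPDenom μ p (expandSystem F m) (fun _ => 1) n Q := by
  simp [IsHPDenom, expandSystem, Sigma.forall, Fin.forall_iff, mul_assoc]

theorem isCombExt_expandSystem_iff (g : ℂ → ℂ) :
    IsCombExt E F m g ↔ IsCombExt E (expandSystem F m) (fun _ => 1) g := by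
  constructor
  · rintro ⟨v, hv, hg⟩
    exact ⟨splitCoeffs v, degree_splitCoeffs_lt v, by rwa [sum_splitCoeffs_mul_expandSystem F hv]⟩
  · rintro ⟨w, hw, hg⟩
    refine ⟨joinCoeffs w, degree_joinCoeffs_lt w, ?_⟩
    rwa [← splitCoeffs_joinCoeffs hw,
      sum_splitCoeffs_mul_expandSystem F (degree_joinCoeffs_lt w)] at hg

theorem isSystemPoleOrd_expandSystem_iff (Φ : ℂ → ℂ) (ξ : ℂ) (τ : ℕ) :
    IsSystemPoleOrd E Φ F m ξ τ ↔ IsSystemPoleOrd E Φ (expandSystem F m) (fun _ => 1) ξ τ := by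
  have hsys : ∀ τ', SysAll E Φ F m ξ τ' ↔ SysAll E Φ (expandSystem F m) (fun _ => 1) ξ τ' :=
    fun _ => forall₃_congr fun _ _ _ =>
      exists_congr fun g => and_congr_left' (isCombExt_expandSystem_iff E F m g)
  rw [IsSystemPoleOrd, IsSystemPoleOrd, hsys, hsys]

end ExpandSystem

theorem stmt_8_general {ι : Type*} [Fintype ι] (E : Set ℂ) (hEc : IsCompact E)
    (μ : Measure ℂ) (p : ℕ → Polynomial ℂ)
    (Φ : ℂ → ℂ) (hΦ : IsExtConfMap E Φ)
    (F : ι → ℂ → ℂ) (hF : ∀ i, HoloNhd E (F i))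
    (m : ι → ℕ) (hm : ∀ i, 1 ≤ m i) :
    letI Fbar : (Σ i : ι, Fin (m i)) → ℂ → ℂ := fun ik z => z ^ (ik.2 : ℕ) * F ik.1 z
    letI mbar : (Σ i : ι, Fin (m i)) → ℕ := fun _ => 1
    (PolyIndep E F m ↔ PolyIndep E Fbar mbar) ∧
    (∀ (ξ : ℂ) (τ : ℕ), VecPoleOrd E Φ F ξ τ ↔ VecPoleOrd E Φ Fbar ξ τ) ∧
    (∀ k : ℕ, vecRhoM E Φ F k = vecRhoM E Φ Fbar k) ∧
    (∀ (n : ℕ) (Q : Polynomial ℂ),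
      IsHPDenom μ p F m n Q ↔ IsHPDenom μ p Fbar mbar n Q) ∧
    (∀ (ξ : ℂ) (τ : ℕ),
      IsSystemPoleOrd E Φ F m ξ τ ↔ IsSystemPoleOrd E Φ Fbar mbar ξ τ) :=
  ⟨polyIndep_expandSystem_iff E F m,
    vecPoleOrd_expandSystem_iff E F m hEc.isClosed hΦ.1.continuousOn hF hm,
    vecRhoM_expandSystem E F m Φ hm,
    isHPDenom_expandSystem_iff F m μ p,
    isSystemPoleOrd_expandSystem_iff E F m Φ⟩

/-- Lemma 3.5 (reduction of `F, m` to `F̄, m̄ = (1,…,1)`). -/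
theorem stmt_8 {ι : Type*} [Fintype ι] (E : Set ℂ) (hEc : IsCompact E)
    (hEinf : E.Infinite)
    (hEsc : SimplyConnectedSpace ↥((((↑) : ℂ → OnePoint ℂ) '' E)ᶜ))
    (μ : Measure ℂ) (hμ : MeasClass E μ)
    (p : ℕ → Polynomial ℂ) (hp : IsONPolys μ p)
    (Φ : ℂ → ℂ) (hΦ : IsExtConfMap E Φ)
    (F : ι → ℂ → ℂ) (hF : ∀ i, HoloNhd E (F i))
    (m : ι → ℕ) (hm : ∀ i, 1 ≤ m i) :
    letI Fbar : (Σ i : ι, Fin (m i)) → ℂ → ℂ := fun ik z => z ^ (ik.2 : ℕ) * F ik.1 z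
    letI mbar : (Σ i : ι, Fin (m i)) → ℕ := fun _ => 1
    (PolyIndep E F m ↔ PolyIndep E Fbar mbar) ∧
    (∀ (ξ : ℂ) (τ : ℕ), VecPoleOrd E Φ F ξ τ ↔ VecPoleOrd E Φ Fbar ξ τ) ∧
    (∀ k : ℕ, vecRhoM E Φ F k = vecRhoM E Φ Fbar k) ∧
    (∀ (n : ℕ) (Q : Polynomial ℂ),
      IsHPDenom μ p F m n Q ↔ IsHPDenom μ p Fbar mbar n Q) ∧
    (∀ (ξ : ℂ) (τ : ℕ),
      IsSystemPoleOrd E Φ F m ξ τ ↔ IsSystemPoleOrd E Φ Fbar mbar ξ τ) :=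
  stmt_8_general E hEc μ p Φ hΦ F hF m hm

end
end

section
/- Let F = (F₁,…,F_d) ∈ H(E)^d, μ ∈ M(E), and fix a multi-index m = (m₁,…,m_d) ∈ ℕ^d. Suppose there is n₀ such that for every n ≥ n₀ the denominator Q^μ_{n,|m|} of the (n,m) orthogonal Hermite–Padé approximant of F is unique and deg Q^μ_{n,|m|} = |m|. Then F is polynomially independent with respect to m. -/
open Complex MeasureTheory Polynomial Set Filter Topology
open scoped ENNReal

noncomputable section

/-!
Suppose `∑ vᵢ Fᵢ = q` near `E` with `deg vᵢ < mᵢ`, and take `n ≥ n₀` with `n > |m| + deg q`.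
The moments `⟨S z^k Fᵢ, p_n⟩_μ` (`k < mᵢ`) define a linear map from the polynomials `S` of degree
`< |m|` to `ℂ^{|m|}`. It is injective: for `S` in its kernel, `Q + S` is again a denominator
(monic, as `deg Q = |m|`), so `S = 0` by uniqueness; hence it is onto. But the coefficient vector
of `(vᵢ)` annihilates its image, since pairing it with the moments of `S` gives
`⟨S q, p_n⟩_μ = 0` (`deg (S q) < n`). So every `vᵢ` vanishes.
-/

lemma LinearMap.dotProduct_eq_zero_of_injective {K V J : Type*} [Field K] [AddCommGroup V]
    [Module K V] [FiniteDimensional K V] [Fintype J] {L : V →ₗ[K] J → K}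
    (hL : Function.Injective L) (hdim : Module.finrank K V = Fintype.card J) {w : J → K}
    (hw : ∀ x, w ⬝ᵥ L x = 0) : w = 0 := by
  have hsurj :=
    (LinearMap.injective_iff_surjective_of_finrank_eq_finrank (by simpa using hdim)).1 hL
  exact dotProduct_eq_zero w fun y => by
    obtain ⟨x, rfl⟩ := hsurj y
    exact hw x

lemma measSupport_eq_support (μ : Measure ℂ) : measSupport μ = μ.support := by
  ext z
  simp [measSupport, Measure.mem_support_iff_forall, pos_iff_ne_zero]

lemma MeasClass.ae_mem {E : Set ℂ} {μ : Measure ℂ} (hμ : MeasClass E μ) : ∀ᵐ z ∂μ, z ∈ E :=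
  mem_of_superset Measure.support_mem_ae (measSupport_eq_support μ ▸ hμ.2.1)

section Pairing

variable {E : Set ℂ} {μ : Measure ℂ}

lemma integrable_of_continuousOn_of_ae_mem [IsFiniteMeasure μ] (hE : IsCompact E)
    (hμE : ∀ᵐ z ∂μ, z ∈ E) {f : ℂ → ℂ} (hf : ContinuousOn f E) : Integrable f μ := by
  simpa [IntegrableOn, Measure.restrict_eq_self_of_ae_mem hμE] using
    hf.integrableOn_compact (μ := μ) hE

lemma mInner_add {f g h : ℂ → ℂ} (hf : Integrable (fun z => f z * starRingEnd ℂ (h z)) μ)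
    (hg : Integrable (fun z => g z * starRingEnd ℂ (h z)) μ) :
    mInner μ (fun z => f z + g z) h = mInner μ f h + mInner μ g h := by
  simp only [mInner, add_mul]
  exact integral_add hf hg

lemma mInner_const_mul (c : ℂ) (f h : ℂ → ℂ) :
    mInner μ (fun z => c * f z) h = c * mInner μ f h := by
  simp only [mInner, mul_assoc]
  exact integral_const_mul c _

lemma mInner_sum {α : Type*} (s : Finset α) {f : α → ℂ → ℂ} {h : ℂ → ℂ}
    (hf : ∀ a ∈ s, Integrable (fun z => f a z * starRingEnd ℂ (h z)) μ) :
    mInner μ (fun z => ∑ a ∈ s, f a z) h = ∑ a ∈ s, mInner μ (f a) h := by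
  simp only [mInner, Finset.sum_mul]
  exact integral_finsetSum s hf

lemma mInner_congr_of_ae_mem (hμE : ∀ᵐ z ∂μ, z ∈ E) {f g : ℂ → ℂ} (hfg : EqOn f g E)
    (h : ℂ → ℂ) : mInner μ f h = mInner μ g h :=
  integral_congr_ae (hμE.mono fun z hz => by simp only [hfg hz])

variable [IsFiniteMeasure μ] (hE : IsCompact E) (hμE : ∀ᵐ z ∂μ, z ∈ E)
include hE hμE

lemma integrable_mul_conj_eval {f : ℂ → ℂ} (hf : ContinuousOn f E) (S : ℂ[X]) :
    Integrable (fun z => f z * starRingEnd ℂ (S.eval z)) μ :=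
  integrable_of_continuousOn_of_ae_mem hE hμE <|
    hf.mul (continuous_conj.comp_continuousOn S.continuousOn)

lemma isLinearMap_mInner_eval_mul {g : ℂ → ℂ} (hg : ContinuousOn g E) (S : ℂ[X]) :
    IsLinearMap ℂ fun R : ℂ[X] => mInner μ (fun z => R.eval z * g z) (fun z => S.eval z) where
  map_add R₁ R₂ := by
    simp only [eval_add, add_mul]
    exact mInner_add (integrable_mul_conj_eval hE hμE (R₁.continuousOn.mul hg) S)
      (integrable_mul_conj_eval hE hμE (R₂.continuousOn.mul hg) S)
  map_smul c R := by
    simp only [eval_smul, smul_eq_mul, mul_assoc]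
    exact mInner_const_mul c _ _

lemma IsONPolys.mInner_eq_zero_of_degree_lt {p : ℕ → ℂ[X]} (hp : IsONPolys μ p) {n : ℕ}
    {R : ℂ[X]} (hR : R.degree < n) : mInner μ (fun z => R.eval z) (fun z => (p n).eval z) = 0 := by
  have hlc (j : ℕ) : (p j).leadingCoeff ≠ 0 := by
    obtain ⟨κ, hκ, hlc⟩ := hp.2.1 j
    exact hlc ▸ ofReal_ne_zero.2 hκ.ne'
  let P : Sequence ℂ := ⟨p, fun j => by
    rw [degree_eq_natDegree (leadingCoeff_ne_zero.1 (hlc j)), hp.1 j]⟩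
  let ℓ := IsLinearMap.mk' _
    (isLinearMap_mInner_eval_mul hE hμE (g := 1) continuousOn_const (p n))
  have hker : R ∈ LinearMap.ker ℓ := by
    refine Submodule.span_le.2 ?_ <|
      P.span_degreeLT (fun j _ => (hlc j).isUnit) ▸ mem_degreeLT.2 hR
    rintro _ ⟨j, hj, rfl⟩
    simpa [ℓ, P, hp.2.2 j n] using (Set.mem_Iio.1 hj).ne
  simpa [ℓ] using hker

end Pairing

section HermitePade

variable {ι : Type*} {μ : Measure ℂ} {p : ℕ → ℂ[X]} {F : ι → ℂ → ℂ} {m : ι → ℕ}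
  {n : ℕ}

def hpMoments (μ : Measure ℂ) (p : ℕ → ℂ[X]) (F : ι → ℂ → ℂ) (m : ι → ℕ) (n : ℕ) (R : ℂ[X]) :
    (Σ i, Fin (m i)) → ℂ :=
  fun j => mInner μ (fun z => R.eval z * z ^ (j.2 : ℕ) * F j.1 z) (fun z => (p n).eval z)

lemma isHPDenom_iff [Fintype ι] {Q : ℂ[X]} :
    IsHPDenom μ p F m n Q ↔ Q.Monic ∧ Q.natDegree ≤ ∑ i, m i ∧ hpMoments μ p F m n Q = 0 := by
  simp [IsHPDenom, hpMoments, funext_iff, Sigma.forall, Fin.forall_iff]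

lemma IsHPDenom.eq_zero_of_hpMoments_eq_zero [Fintype ι] {Q S : ℂ[X]}
    (hQ : IsHPDenom μ p F m n Q) (hQdeg : Q.natDegree = ∑ i, m i)
    (huniq : ∀ Q', IsHPDenom μ p F m n Q' → Q' = Q)
    (hlin : IsLinearMap ℂ (hpMoments μ p F m n)) (hS : S.degree < ∑ i, m i)
    (hSm : hpMoments μ p F m n S = 0) : S = 0 := by
  obtain ⟨hQmonic, -, hQm⟩ := isHPDenom_iff.1 hQ
  have hSQ : S.degree < Q.degree := by rwa [degree_eq_natDegree hQmonic.ne_zero, hQdeg]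
  have hQS : IsHPDenom μ p F m n (Q + S) := isHPDenom_iff.2
    ⟨hQmonic.add_of_left hSQ, (natDegree_add_eq_left_of_degree_lt hSQ).trans_le hQdeg.le,
      by rw [hlin.map_add, hQm, hSm, add_zero]⟩
  exact add_eq_left.1 (huniq _ hQS)

variable {E : Set ℂ} [IsFiniteMeasure μ] (hE : IsCompact E) (hμE : ∀ᵐ z ∂μ, z ∈ E)
  (hF : ∀ i, ContinuousOn (F i) E)
include hE hμE hF

lemma isLinearMap_hpMoments : IsLinearMap ℂ (hpMoments μ p F m n) := by
  have hlin (j : Σ i, Fin (m i)) :=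
    isLinearMap_mInner_eval_mul (g := fun z => z ^ (j.2 : ℕ) * F j.1 z) hE hμE
      ((continuousOn_pow _).mul (hF j.1)) (p n)
  constructor
  · exact fun R₁ R₂ => funext fun j => by
      simpa only [hpMoments, Pi.add_apply, mul_assoc] using (hlin j).map_add R₁ R₂
  · exact fun c R => funext fun j => by
      simpa only [hpMoments, Pi.smul_apply, mul_assoc] using (hlin j).map_smul c R

lemma dotProduct_coeff_hpMoments [Fintype ι] {v : ι → ℂ[X]} (hv : ∀ i, (v i).degree < m i)
    (R : ℂ[X]) :
    (fun j : Σ i, Fin (m i) => (v j.1).coeff j.2) ⬝ᵥ hpMoments μ p F m n R =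
      mInner μ (fun z => R.eval z * ∑ i, (v i).eval z * F i z) (fun z => (p n).eval z) := by
  have hexpand (z : ℂ) : R.eval z * ∑ i, (v i).eval z * F i z =
      ∑ j : Σ i, Fin (m i), (v j.1).coeff j.2 * (R.eval z * z ^ (j.2 : ℕ) * F j.1 z) := by
    rw [Fintype.sum_sigma, Finset.mul_sum]
    refine Finset.sum_congr rfl fun i _ => ?_
    rw [eval_eq_sum_degreeLTEquiv (mem_degreeLT.2 (hv i)), Finset.sum_mul, Finset.mul_sum]
    exact Finset.sum_congr rfl fun k _ => by
      change _ * ((v i).coeff k * _ * _) = (v i).coeff k * _; ring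
  simp only [hexpand, dotProduct, hpMoments, ← mInner_const_mul]
  refine (mInner_sum _ fun j _ => integrable_mul_conj_eval hE hμE ?_ _).symm
  exact continuousOn_const.mul ((R.continuousOn.mul (continuousOn_pow _)).mul (hF j.1))

end HermitePade

theorem stmt_9_general {ι : Type*} [Fintype ι] (E : Set ℂ) (hEc : IsCompact E)
    (μ : Measure ℂ) (hμ : MeasClass E μ)
    (p : ℕ → Polynomial ℂ) (hp : IsONPolys μ p)
    (F : ι → ℂ → ℂ) (hF : ∀ i, HoloNhd E (F i))
    (m : ι → ℕ) (n₀ : ℕ)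
    (huniq : ∀ n ≥ n₀, ∃! Q : Polynomial ℂ, IsHPDenom μ p F m n Q)
    (hdeg : ∀ n ≥ n₀, ∀ Q : Polynomial ℂ, IsHPDenom μ p F m n Q →
      Q.natDegree = ∑ i, m i) :
    PolyIndep E F m := by
  rintro ⟨v, hv, ⟨i₀, hvi₀⟩, q, U, -, hEU, hq⟩
  have : IsFiniteMeasure μ := hμ.1
  have hμE := hμ.ae_mem
  have hFc (i : ι) : ContinuousOn (F i) E := by
    obtain ⟨V, -, hEV, hFV⟩ := hF i
    exact hFV.continuousOn.mono hEV
  set N := ∑ i, m i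
  obtain ⟨n, hn₀, hn⟩ : ∃ n ≥ n₀, N + q.natDegree < n := ⟨max n₀ (N + q.natDegree + 1),
    le_max_left _ _, (Nat.lt_succ_self _).trans_le (le_max_right _ _)⟩
  obtain ⟨Q, hQ, hQuniq⟩ := huniq n hn₀
  have hlin := isLinearMap_hpMoments (p := p) (m := m) (n := n) hEc hμE hFc
  let L := (IsLinearMap.mk' _ hlin).comp (degreeLT ℂ N).subtype
  have hL : Function.Injective L := (injective_iff_map_eq_zero L).2 fun S hS => Subtype.ext <|
    hQ.eq_zero_of_hpMoments_eq_zero (hdeg n hn₀ Q hQ) hQuniq hlin (mem_degreeLT.1 S.2) hS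
  have hdim : Module.finrank ℂ (degreeLT ℂ N) = Fintype.card (Σ i, Fin (m i)) := by
    simp [(degreeLTEquiv ℂ N).finrank_eq, N]
  have hw := L.dotProduct_eq_zero_of_injective hL hdim fun S => by
    have hSq : (S * q : ℂ[X]).degree < n :=
      degree_le_natDegree.trans_lt <| WithBot.coe_lt_coe.2 <| natDegree_mul_le.trans_lt <|
        (Nat.add_le_add_right (natDegree_le_of_degree_le (mem_degreeLT.1 S.2).le) _).trans_lt hn
    rw [LinearMap.comp_apply, IsLinearMap.mk'_apply, dotProduct_coeff_hpMoments hEc hμE hFc hv,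
      mInner_congr_of_ae_mem hμE (g := fun z => ((S : ℂ[X]) * q).eval z)
        fun z hz => by simp [hq (hEU hz)]]
    exact hp.mInner_eq_zero_of_degree_lt hEc hμE hSq
  exact hvi₀ <| (degreeLTEquiv_eq_zero_iff_eq_zero (mem_degreeLT.2 (hv i₀))).1 <|
    funext fun k => congrFun hw ⟨i₀, k⟩

/-- Lemma 3.6 : uniqueness and full degree of the denominators imply
polynomial independence. -/
theorem stmt_9 {ι : Type*} [Fintype ι] (E : Set ℂ) (hEc : IsCompact E)
    (hEinf : E.Infinite)
    (hEsc : SimplyConnectedSpace ↥((((↑) : ℂ → OnePoint ℂ) '' E)ᶜ))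
    (μ : Measure ℂ) (hμ : MeasClass E μ)
    (p : ℕ → Polynomial ℂ) (hp : IsONPolys μ p)
    (F : ι → ℂ → ℂ) (hF : ∀ i, HoloNhd E (F i))
    (m : ι → ℕ) (hm : ∀ i, 1 ≤ m i) (n₀ : ℕ)
    (huniq : ∀ n ≥ n₀, ∃! Q : Polynomial ℂ, IsHPDenom μ p F m n Q)
    (hdeg : ∀ n ≥ n₀, ∀ Q : Polynomial ℂ, IsHPDenom μ p F m n Q →
      Q.natDegree = ∑ i, m i) :
    PolyIndep E F m :=
  stmt_9_general E hEc μ hμ p hp F hF m n₀ huniq hdeg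

end
end

section
/- Given F = (F₁,…,F_d) ∈ H(E)^d and a multi-index m = (m₁,…,m_d) ∈ ℕ^d, the system F can have at most |m| system poles with respect to m, counting their orders. Moreover, if F has exactly |m| system poles with respect to m counting multiplicities and ξ is a system pole of order τ, then for every s > τ there is no polynomial combination ∑_{i=1}^d v_i F_i with deg v_i < m_i that is holomorphic on a neighborhood of the closure of D_{|Φ(ξ)|} except for a pole at z = ξ of exact order s. -/
open Complex MeasureTheory Polynomial Set Filter Topology
open scoped ENNReal

noncomputable section

/-! Coefficient vectors `(v₁, …, v_d)` with `deg vᵢ < mᵢ` form a space of dimension `|m|`. For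
each system pole `ξ` and each `t ≤ τ(ξ)` pick a combination `g = ∑ vᵢ Fᵢ` with a pole of exact
order `t` at `ξ`; these coefficient vectors are linearly independent. Indeed, a relation
`∑ c_j v_j = 0` makes `∑ c_j g_j` vanish near `E`. Let `ρ` be the least `|Φ(ξ_j)|` with `c_j ≠ 0`:
all `g_j` involved are holomorphic on the connected set `D_ρ ∖ E`, which accumulates at `E`, so
the sum vanishes there by the identity theorem. But a pole `ξ_j` with `|Φ(ξ_j)| = ρ` lies on the
boundary of `D_ρ ∖ E`, and there the summand with the highest pole order dominates, so the sum
has a genuine pole and cannot vanish nearby. Hence there are at most `|m|` pairs `(ξ, t)`, and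
when there are exactly `|m|`, an extra combination with a pole of order `s > τ(ξ)` at `ξ` would
give `|m| + 1` independent vectors. -/

theorem Complex.isPreconnected_setOf_lt_norm_lt {r R : ℝ} (hr : 0 < r) (hR : 0 < R) :
    IsPreconnected {w : ℂ | r < ‖w‖ ∧ ‖w‖ < R} := by
  have hstrip : Convex ℝ {w : ℂ | Real.log r < w.re ∧ w.re < Real.log R} :=
    (convex_halfSpace_re_gt _).inter (convex_halfSpace_re_lt _)
  convert hstrip.isPreconnected.image _ continuous_exp.continuousOn using 1
  ext w
  constructor
  · rintro ⟨hrw, hwR⟩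
    have hw : w ≠ 0 := norm_pos_iff.1 (hr.trans hrw)
    refine ⟨log w, ⟨?_, ?_⟩, exp_log hw⟩ <;> rw [log_re]
    exacts [Real.log_lt_log hr hrw, Real.log_lt_log (hr.trans hrw) hwR]
  · rintro ⟨u, ⟨hru, huR⟩, rfl⟩
    refine ⟨?_, ?_⟩ <;> rw [norm_exp]
    exacts [(Real.log_lt_iff_lt_exp hr).1 hru, (Real.lt_log_iff_exp_lt hR).1 huR]

/-- The part of the canonical domain `D_ρ` lying outside `E`. -/
def exteriorSublevel (E : Set ℂ) (Φ : ℂ → ℂ) (ρ : ℝ) : Set ℂ :=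
  {z | z ∉ E ∧ ‖Φ z‖ < ρ}

theorem exteriorSublevel_subset_dcan {E : Set ℂ} {Φ : ℂ → ℂ} {ρ ρ' : ℝ} (h : ρ ≤ ρ') :
    exteriorSublevel E Φ ρ ⊆ Dcan E Φ (ENNReal.ofReal ρ') := fun _ hz =>
  Or.inr ⟨hz.1, ENNReal.ofReal_lt_ofReal_iff'.2 ⟨hz.2.trans_le h,
    (norm_nonneg _).trans_lt (hz.2.trans_le h)⟩⟩

namespace IsExtConfMap

variable {E : Set ℂ} {Φ : ℂ → ℂ}

theorem one_lt_norm (hΦ : IsExtConfMap E Φ) {z : ℂ} (hz : z ∉ E) : 1 < ‖Φ z‖ :=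
  hΦ.2.1.mapsTo hz

theorem analyticAt (hE : IsClosed E) (hΦ : IsExtConfMap E Φ) {z : ℂ} (hz : z ∉ E) :
    AnalyticAt ℂ Φ z :=
  hΦ.1.analyticAt (hE.isOpen_compl.mem_nhds hz)

theorem nhds_le_map_nhds (hE : IsClosed E) (hΦ : IsExtConfMap E Φ) {z : ℂ} (hz : z ∉ E) :
    𝓝 (Φ z) ≤ map Φ (𝓝 z) := by
  refine ((hΦ.analyticAt hE hz).eventually_constant_or_nhds_le_map_nhds).resolve_left ?_
  intro hconst
  have hnear : ∀ᶠ z' in 𝓝[≠] z, (Φ z' = Φ z ∧ z' ∉ E) ∧ z' ≠ z :=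
    ((hconst.and (hE.isOpen_compl.eventually_mem hz)).filter_mono nhdsWithin_le_nhds).and
      self_mem_nhdsWithin
  obtain ⟨z', ⟨hz'Φ, hz'E⟩, hz'z⟩ := hnear.exists
  exact hz'z (hΦ.2.1.injOn hz'E hz hz'Φ)

theorem isOpenMap_domRestrict (hE : IsClosed E) (hΦ : IsExtConfMap E Φ) :
    IsOpenMap (Eᶜ.domRestrict Φ) := by
  refine isOpenMap_iff_nhds_le.2 fun z => ?_
  rw [domRestrict_eq, ← map_map, map_nhds_subtype_coe_eq_nhds z.2 (hE.isOpen_compl.mem_nhds z.2)]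
  exact hΦ.nhds_le_map_nhds hE z.2

theorem tendsto_norm_cobounded (hΦ : IsExtConfMap E Φ) :
    Tendsto (fun z => ‖Φ z‖) (Bornology.cobounded ℂ) atTop := by
  obtain ⟨c, hc, hlim⟩ := hΦ.2.2
  have hprod : Tendsto (fun z => ‖Φ z / z‖ * ‖z‖) (Bornology.cobounded ℂ) atTop :=
    Tendsto.pos_mul_atTop (by rwa [norm_real, Real.norm_of_nonneg hc.le]) hlim.norm
      tendsto_norm_cobounded_atTop
  refine hprod.congr' ?_
  filter_upwards [Bornology.eventually_ne_cobounded 0] with z hz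
  rw [← norm_mul, div_mul_cancel₀ _ hz]

theorem isOpen_exteriorSublevel (hE : IsClosed E) (hΦ : IsExtConfMap E Φ) (ρ : ℝ) :
    IsOpen (exteriorSublevel E Φ ρ) :=
  (continuous_norm.comp_continuousOn hΦ.1.continuousOn).isOpen_inter_preimage hE.isOpen_compl
    isOpen_Iio

theorem isPreconnected_exteriorSublevel (hE : IsClosed E) (hΦ : IsExtConfMap E Φ) {ρ : ℝ}
    (hρ : 0 < ρ) : IsPreconnected (exteriorSublevel E Φ ρ) := by
  have hpre := (isPreconnected_setOf_lt_norm_lt one_pos hρ).preimage_of_isOpenMap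
    hΦ.2.1.injOn.injective (hΦ.isOpenMap_domRestrict hE) fun w hw =>
      let ⟨z, hz, hzw⟩ := hΦ.2.1.surjOn hw.1
      ⟨⟨z, hz⟩, hzw⟩
  convert hpre.image _ continuous_subtype_val.continuousOn using 1
  ext z
  exact ⟨fun hz => ⟨⟨z, hz.1⟩, ⟨hΦ.one_lt_norm hz.1, hz.2⟩, rfl⟩,
    fun ⟨z', hz', hz'z⟩ => hz'z ▸ ⟨z'.2, hz'.2⟩⟩

theorem exists_mem_exteriorSublevel (hΦ : IsExtConfMap E Φ) {O : Set ℂ}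
    (hO : IsOpen O) (hEO : E ⊆ O) {ρ : ℝ} (hρ : 1 < ρ) :
    (O ∩ exteriorSublevel E Φ ρ).Nonempty := by
  -- The points outside `O` where `‖Φ‖ ≤ 2` form a compact subset of `Eᶜ`, so `‖Φ‖ ≥ μ > 1` there;
  -- a preimage of a value of modulus below `min μ ρ` must then lie in `O`.
  have hbdd : Bornology.IsBounded {z | ‖Φ z‖ ≤ 2} := by
    rw [Bornology.isBounded_def]
    filter_upwards [hΦ.tendsto_norm_cobounded.eventually_gt_atTop 2] with z hz
    exact not_le.2 hz
  set K := closure {z | ‖Φ z‖ ≤ 2} \ O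
  have hKE : K ⊆ Eᶜ := fun z hz hzE => hz.2 (hEO hzE)
  obtain ⟨μ, hμ, hKμ⟩ := (hbdd.isCompact_closure.diff hO).exists_forall_le'
    (continuous_norm.comp_continuousOn (hΦ.1.continuousOn.mono hKE))
    fun z hz => hΦ.one_lt_norm (hKE hz)
  obtain ⟨r, hr1, hr⟩ := exists_between (lt_min (lt_min hμ hρ) one_lt_two)
  have hr' : 1 < ‖(r : ℂ)‖ := by rwa [norm_real, Real.norm_of_nonneg (by linarith)]
  obtain ⟨z, hzE, hzr⟩ := hΦ.2.1.surjOn hr'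
  have hnorm : ‖Φ z‖ = r := by rw [hzr, norm_real, Real.norm_of_nonneg (by linarith)]
  simp only [lt_min_iff] at hr
  refine ⟨z, ?_, hzE, by rw [hnorm]; exact hr.1.2⟩
  by_contra hzO
  have : μ ≤ ‖Φ z‖ := hKμ z ⟨subset_closure (show ‖Φ z‖ ≤ 2 by rw [hnorm]; exact hr.2.le), hzO⟩
  linarith [hr.1.1]

theorem frequently_mem_exteriorSublevel (hE : IsClosed E) (hΦ : IsExtConfMap E Φ) {ξ : ℂ}
    (hξ : ξ ∉ E) : ∃ᶠ z in 𝓝[≠] ξ, z ∈ exteriorSublevel E Φ ‖Φ ξ‖ := by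
  have hball : ∃ᶠ w in 𝓝 (Φ ξ), ‖w‖ < ‖Φ ξ‖ := by
    have : Φ ξ ∈ closure (Metric.ball 0 ‖Φ ξ‖) := by
      rw [closure_ball 0 (zero_lt_one.trans (hΦ.one_lt_norm hξ)).ne']
      exact mem_closedBall_zero_iff.2 le_rfl
    exact (mem_closure_iff_frequently.1 this).mono fun w hw => mem_ball_zero_iff.1 hw
  have hpre : ∃ᶠ z in 𝓝 ξ, ‖Φ z‖ < ‖Φ ξ‖ :=
    frequently_map.1 (hball.filter_mono (hΦ.nhds_le_map_nhds hE hξ))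
  rw [frequently_nhdsWithin_iff]
  refine (hpre.and_eventually (hE.isOpen_compl.mem_nhds hξ)).mono fun z ⟨hzΦ, hzE⟩ =>
    ⟨⟨hzE, hzΦ⟩, ?_⟩
  rintro rfl
  exact lt_irrefl _ hzΦ

theorem mem_closure_dcan (hE : IsClosed E) (hΦ : IsExtConfMap E Φ) {x : ℂ} (hx : x ∉ E)
    {ρ : ℝ} (hρ : ‖Φ x‖ ≤ ρ) : x ∈ closure (Dcan E Φ (ENNReal.ofReal ρ)) :=
  mem_closure_iff_frequently.2 <| ((hΦ.frequently_mem_exteriorSublevel hE hx).filter_mono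
    nhdsWithin_le_nhds).mono fun _ hz => exteriorSublevel_subset_dcan hρ hz

theorem eqOn_zero_of_agreesNear_zero (hE : IsClosed E) (hΦ : IsExtConfMap E Φ) {ρ : ℝ}
    (hρ : 1 < ρ) {f : ℂ → ℂ} (hf : DifferentiableOn ℂ f (exteriorSublevel E Φ ρ))
    (h0 : AgreesNear E f 0) : EqOn f 0 (exteriorSublevel E Φ ρ) := by
  obtain ⟨O, hO, hEO, hfO⟩ := h0
  obtain ⟨z₀, hz₀O, hz₀⟩ := hΦ.exists_mem_exteriorSublevel hO hEO hρ
  exact (hf.analyticOnNhd (hΦ.isOpen_exteriorSublevel hE ρ))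
    |>.eqOn_zero_of_preconnected_of_eventuallyEq_zero
      (hΦ.isPreconnected_exteriorSublevel hE (by linarith)) hz₀
      (eventuallyEq_of_mem (hO.mem_nhds hz₀O) hfO)

end IsExtConfMap

theorem lt_meromorphicOrderAt_sum {𝕜 V ι : Type*} [NontriviallyNormedField 𝕜]
    [NormedAddCommGroup V] [NormedSpace 𝕜 V] {s : Finset ι} {f : ι → 𝕜 → V} {x : 𝕜} {n : ℤ}
    (hf : ∀ i ∈ s, MeromorphicAt (f i) x) (hn : ∀ i ∈ s, n < meromorphicOrderAt (f i) x) :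
    MeromorphicAt (∑ i ∈ s, f i) x ∧ n < meromorphicOrderAt (∑ i ∈ s, f i) x := by
  classical
  induction s using Finset.induction_on with
  | empty =>
    rw [Finset.sum_empty, (meromorphicOrderAt_eq_top_iff (f := 0)).2 (.of_forall fun _ => rfl)]
    exact ⟨analyticAt_const.meromorphicAt, WithTop.coe_lt_top n⟩
  | insert i s hi ih =>
    rw [Finset.forall_mem_insert] at hf hn
    obtain ⟨hs, hns⟩ := ih hf.2 hn.2
    rw [Finset.sum_insert hi]
    exact ⟨hf.1.add hs, (lt_min hn.1 hns).trans_le (meromorphicOrderAt_add hf.1 hs)⟩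

namespace IsPoleOrd

variable {g : ℂ → ℂ} {ξ : ℂ} {t : ℕ}

theorem const_mul (h : IsPoleOrd g ξ t) {c : ℂ} (hc : c ≠ 0) :
    IsPoleOrd (fun z => c * g z) ξ t := by
  obtain ⟨f, ⟨V, hV, hξV, hf⟩, hf0, hev⟩ := h
  exact ⟨fun z => c * f z, ⟨V, hV, hξV, hf.const_mul c⟩, mul_ne_zero hc hf0,
    hev.mono fun z hz => by simp only [hz, mul_div_assoc]⟩

theorem meromorphicAt_and_meromorphicOrderAt_eq (h : IsPoleOrd g ξ t) :
    MeromorphicAt g ξ ∧ meromorphicOrderAt g ξ = ((-t : ℤ) : WithTop ℤ) := by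
  obtain ⟨f, ⟨V, hV, hξV, hf⟩, hf0, hev⟩ := h
  have hfan : AnalyticAt ℂ f ξ := hf.analyticAt (hV.mem_nhds hξV)
  have hev' : g =ᶠ[𝓝[≠] ξ] fun z => (z - ξ) ^ (-(t : ℤ)) • f z :=
    hev.mono fun z hz => by simp only [hz, zpow_neg, zpow_natCast, smul_eq_mul, div_eq_inv_mul]
  have hmero : MeromorphicAt g ξ :=
    (by fun_prop : MeromorphicAt (fun z => (z - ξ) ^ (-(t : ℤ)) • f z) ξ).congr hev'.symm
  exact ⟨hmero, (meromorphicOrderAt_eq_int_iff hmero).2 ⟨f, hfan, hf0, hev'⟩⟩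

theorem not_analyticAt (h : IsPoleOrd g ξ t) (ht : 0 < t) : ¬ AnalyticAt ℂ g ξ := fun hg => by
  have := hg.meromorphicOrderAt_nonneg
  rw [h.meromorphicAt_and_meromorphicOrderAt_eq.2] at this
  exact absurd (WithTop.coe_le_coe.1 this) (by omega)

theorem meromorphicOrderAt_add_sum {ι : Type*} (h : IsPoleOrd g ξ t) (ht : 0 < t)
    {s : Finset ι} {f : ι → ℂ → ℂ}
    (hf : ∀ i ∈ s, AnalyticAt ℂ (f i) ξ ∨ ∃ t' < t, IsPoleOrd (f i) ξ t') :
    meromorphicOrderAt (g + ∑ i ∈ s, f i) ξ = ((-t : ℤ) : WithTop ℤ) := by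
  have hlt : ∀ i ∈ s,
      MeromorphicAt (f i) ξ ∧ ((-t : ℤ) : WithTop ℤ) < meromorphicOrderAt (f i) ξ := by
    intro i hi
    rcases hf i hi with hfi | ⟨t', ht', hfi⟩
    · refine ⟨hfi.meromorphicAt, lt_of_lt_of_le ?_ hfi.meromorphicOrderAt_nonneg⟩
      exact_mod_cast (by omega : -(t : ℤ) < 0)
    · obtain ⟨hm, hord⟩ := hfi.meromorphicAt_and_meromorphicOrderAt_eq
      exact ⟨hm, by rw [hord]; exact_mod_cast (by omega : -(t : ℤ) < -t')⟩
  obtain ⟨hs, hslt⟩ :=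
    lt_meromorphicOrderAt_sum (fun i hi => (hlt i hi).1) fun i hi => (hlt i hi).2
  rw [← h.meromorphicAt_and_meromorphicOrderAt_eq.2] at hslt ⊢
  exact meromorphicOrderAt_add_eq_left_of_lt hs hslt

end IsPoleOrd

theorem HoloNhd.sum_eval_mul {ι : Type*} [Fintype ι] {E : Set ℂ} {F : ι → ℂ → ℂ}
    (hF : ∀ i, HoloNhd E (F i)) (v : ι → ℂ[X]) :
    HoloNhd E (fun z => ∑ i, (v i).eval z * F i z) := by
  choose U hU hEU hFU using hF
  refine ⟨⋂ i, U i, isOpen_iInter_of_finite hU, subset_iInter hEU, ?_⟩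
  exact DifferentiableOn.fun_sum fun i _ =>
    (v i).differentiable.differentiableOn.mul ((hFU i).mono (iInter_subset _ i))

theorem AgreesNear.analyticAt {E : Set ℂ} {f g : ℂ → ℂ} (h : AgreesNear E f g)
    (hf : HoloNhd E f) {z : ℂ} (hz : z ∈ E) : AnalyticAt ℂ g z := by
  obtain ⟨O, hO, hEO, hfg⟩ := h
  obtain ⟨U, hU, hEU, hfU⟩ := hf
  exact (hfU.analyticAt (hU.mem_nhds (hEU hz))).congr
    (eventuallyEq_of_mem (hO.mem_nhds (hEO hz)) hfg)

namespace HoloExceptPole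

variable {E : Set ℂ} {Φ g : ℂ → ℂ} {ξ : ℂ} {t : ℕ}

theorem isPoleOrd (h : HoloExceptPole E Φ g ξ t) : IsPoleOrd g ξ t :=
  let ⟨_, _, _, _, hpole⟩ := h
  hpole

theorem differentiableOn_exteriorSublevel (h : HoloExceptPole E Φ g ξ t) {ρ : ℝ}
    (hρ : ρ ≤ ‖Φ ξ‖) : DifferentiableOn ℂ g (exteriorSublevel E Φ ρ) := by
  obtain ⟨U, -, hDU, hg, -⟩ := h
  refine hg.mono fun z hz => ⟨hDU (subset_closure (exteriorSublevel_subset_dcan hρ hz)), ?_⟩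
  rintro rfl
  exact lt_irrefl _ (hz.2.trans_le hρ)

theorem analyticAt (h : HoloExceptPole E Φ g ξ t) {x : ℂ}
    (hx : x ∈ closure (Dcan E Φ (ENNReal.ofReal ‖Φ ξ‖))) (hne : x ≠ ξ) : AnalyticAt ℂ g x := by
  obtain ⟨U, hU, hDU, hg, -⟩ := h
  exact hg.analyticAt ((hU.sdiff isClosed_singleton).mem_nhds ⟨hDU hx, hne⟩)

end HoloExceptPole

theorem Polynomial.card_le_sum_of_linearIndependent {K ι J : Type*} [Field K] [Fintype ι]
    [Fintype J] {m : ι → ℕ} {v : J → ι → K[X]} (hv : LinearIndependent K v)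
    (hdeg : ∀ j i, (v j i).degree < m i) : Fintype.card J ≤ ∑ i, m i := by
  let v' : J → ∀ i, degreeLT K (m i) := fun j i => ⟨v j i, mem_degreeLT.2 (hdeg j i)⟩
  have hv' : LinearIndependent K v' := LinearIndependent.of_comp
    (LinearMap.pi fun i => (degreeLT K (m i)).subtype.comp (LinearMap.proj i)) hv
  simpa [Module.finrank_pi_fintype, (degreeLTEquiv K _).finrank_eq] using
    hv'.fintype_card_le_finrank

theorem agreesNear_sum_mul_eq_zero {ι J : Type*} [Fintype ι] {E : Set ℂ} {F : ι → ℂ → ℂ}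
    {s : Finset J} {c : J → ℂ} {v : J → ι → ℂ[X]} {g : J → ℂ → ℂ}
    (hc : ∑ j ∈ s, c j • v j = 0)
    (hv : ∀ j, AgreesNear E (fun z => ∑ i, (v j i).eval z * F i z) (g j)) :
    AgreesNear E (fun z => ∑ j ∈ s, c j * g j z) 0 := by
  choose O hO hEO hgO using hv
  refine ⟨⋂ j ∈ s, O j, isOpen_biInter_finset fun j _ => hO j,
    subset_iInter₂ fun j _ => hEO j, fun z hz => ?_⟩
  calc ∑ j ∈ s, c j * g j z = ∑ j ∈ s, c j * ∑ i, (v j i).eval z * F i z :=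
        Finset.sum_congr rfl fun j hj => by rw [← hgO j (mem_iInter₂.1 hz j hj)]
    _ = ∑ i, ((∑ j ∈ s, c j • v j) i).eval z * F i z := by
        simp only [Finset.sum_apply, Pi.smul_apply, eval_finsetSum, eval_smul, smul_eq_mul,
          Finset.mul_sum, Finset.sum_mul, mul_assoc]
        exact Finset.sum_comm
    _ = 0 := by simp only [hc, Pi.zero_apply, eval_zero, zero_mul, Finset.sum_const_zero]

theorem linearIndependent_of_holoExceptPole {ι J : Type*} [Fintype ι] [Fintype J] {E : Set ℂ}
    (hE : IsClosed E) {Φ : ℂ → ℂ} (hΦ : IsExtConfMap E Φ) {F : ι → ℂ → ℂ}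
    (hF : ∀ i, HoloNhd E (F i)) {ξ : J → ℂ} {t : J → ℕ} {g : J → ℂ → ℂ} {v : J → ι → ℂ[X]}
    (hinj : Function.Injective fun j => (ξ j, t j)) (ht : ∀ j, 0 < t j)
    (hv : ∀ j, AgreesNear E (fun z => ∑ i, (v j i).eval z * F i z) (g j))
    (hpole : ∀ j, HoloExceptPole E Φ (g j) (ξ j) (t j)) :
    LinearIndependent ℂ v := by
  classical
  rw [Fintype.linearIndependent_iff]
  by_contra! ⟨c, hc, j₁, hj₁⟩
  have hξE : ∀ j, ξ j ∉ E := fun j hξ => (hpole j).isPoleOrd.not_analyticAt (ht j)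
    ((hv j).analyticAt (HoloNhd.sum_eval_mul hF _) hξ)
  set s := Finset.univ.filter fun j => c j ≠ 0
  obtain ⟨jm, hjm, hmin⟩ :=
    s.exists_min_image (fun j => ‖Φ (ξ j)‖) ⟨j₁, by simpa [s] using hj₁⟩
  set x := ξ jm
  set S : ℂ → ℂ := fun z => ∑ j ∈ s, c j * g j z
  have hS_zero : EqOn S 0 (exteriorSublevel E Φ ‖Φ x‖) :=
    hΦ.eqOn_zero_of_agreesNear_zero hE (hΦ.one_lt_norm (hξE jm))
      (DifferentiableOn.fun_sum fun j hj =>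
        ((hpole j).differentiableOn_exteriorSublevel (hmin j hj)).const_mul _)
      (agreesNear_sum_mul_eq_zero ((Finset.sum_filter_of_ne (p := (c · ≠ 0)) fun _ _ h h0 =>
        h (by rw [h0, zero_smul])).trans hc) hv)
  have hS_freq : ∃ᶠ z in 𝓝[≠] x, S z = 0 :=
    (hΦ.frequently_mem_exteriorSublevel hE (hξE jm)).mono fun z hz => hS_zero hz
  obtain ⟨j₀, hj₀, hmax⟩ :=
    (s.filter (ξ · = x)).exists_max_image t ⟨jm, Finset.mem_filter.2 ⟨hjm, rfl⟩⟩
  rw [Finset.mem_filter] at hj₀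
  have hpole_mul : ∀ j ∈ s, IsPoleOrd (fun z => c j * g j z) (ξ j) (t j) := fun j hj =>
    (hpole j).isPoleOrd.const_mul (Finset.mem_filter.1 hj).2
  have hS_eq : S = (fun z => c j₀ * g j₀ z) + ∑ j ∈ s.erase j₀, fun z => c j * g j z := by
    ext z
    simp only [S, Pi.add_apply, Finset.sum_apply]
    exact (Finset.add_sum_erase _ _ hj₀.1).symm
  have hord : meromorphicOrderAt S x = ((-t j₀ : ℤ) : WithTop ℤ) := by
    rw [hS_eq]
    refine (hj₀.2 ▸ hpole_mul j₀ hj₀.1).meromorphicOrderAt_add_sum (ht j₀) fun j hj => ?_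
    obtain ⟨hjj₀, hjs⟩ := Finset.mem_erase.1 hj
    by_cases hξj : ξ j = x
    · refine Or.inr ⟨t j, (hmax j (Finset.mem_filter.2 ⟨hjs, hξj⟩)).lt_of_ne fun h => hjj₀ ?_,
        hξj ▸ hpole_mul j hjs⟩
      exact hinj (by simp only [hξj, hj₀.2, h])
    · exact Or.inl (analyticAt_const.mul ((hpole j).analyticAt
        (hΦ.mem_closure_dcan hE (hξE jm) (hmin j hjs)) (Ne.symm hξj)))
  have hS_mero : MeromorphicAt S x := meromorphicAt_of_meromorphicOrderAt_ne_zero <| by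
    rw [hord]; exact_mod_cast (by have := ht j₀; omega : (-t j₀ : ℤ) ≠ 0)
  have htop :=
    meromorphicOrderAt_eq_top_iff.2 (hS_mero.frequently_zero_iff_eventuallyEq_zero.1 hS_freq)
  rw [hord] at htop
  exact WithTop.coe_ne_top htop

theorem card_le_sum_of_forall_exists_comb {ι : Type*} [Fintype ι] {E : Set ℂ} (hE : IsClosed E)
    {Φ : ℂ → ℂ} (hΦ : IsExtConfMap E Φ) {F : ι → ℂ → ℂ} (hF : ∀ i, HoloNhd E (F i))
    {m : ι → ℕ} (P : Finset (ℂ × ℕ))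
    (hP : ∀ p ∈ P, 0 < p.2 ∧ ∃ g, IsCombExt E F m g ∧ HoloExceptPole E Φ g p.1 p.2) :
    P.card ≤ ∑ i, m i := by
  choose hpos g hcomb hpole using hP
  choose v hdeg hv using hcomb
  simpa using Polynomial.card_le_sum_of_linearIndependent
    (linearIndependent_of_holoExceptPole hE hΦ hF (ξ := fun p : P => p.1.1) (t := fun p => p.1.2)
      Subtype.val_injective (fun p => hpos _ p.2) (fun p => hv _ p.2) fun p => hpole _ p.2)
    fun p => hdeg _ p.2

def poleOrderPairs (S : Finset ℂ) (ord : ℂ → ℕ) : Finset (ℂ × ℕ) :=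
  (S.sigma fun ξ => Finset.Icc 1 (ord ξ)).map (Equiv.sigmaEquivProd ℂ ℕ).toEmbedding

theorem mem_poleOrderPairs {S : Finset ℂ} {ord : ℂ → ℕ} {p : ℂ × ℕ} :
    p ∈ poleOrderPairs S ord ↔ p.1 ∈ S ∧ 1 ≤ p.2 ∧ p.2 ≤ ord p.1 := by
  simp [poleOrderPairs]

theorem card_poleOrderPairs (S : Finset ℂ) (ord : ℂ → ℕ) :
    (poleOrderPairs S ord).card = ∑ ξ ∈ S, ord ξ := by
  simp [poleOrderPairs]

section SystemPoles

variable {ι : Type*} [Fintype ι] {E : Set ℂ} {Φ : ℂ → ℂ} {F : ι → ℂ → ℂ} {m : ι → ℕ}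

theorem IsSystemPoleOrd.unique {ξ : ℂ} {τ₁ τ₂ : ℕ} (h₁ : IsSystemPoleOrd E Φ F m ξ τ₁)
    (h₂ : IsSystemPoleOrd E Φ F m ξ τ₂) : τ₁ = τ₂ := by
  by_contra hne
  rcases Nat.lt_or_gt_of_ne hne with h | h
  · exact h₁.2.2 fun t ht1 ht2 => h₂.2.1 t ht1 (by omega)
  · exact h₂.2.2 fun t ht1 ht2 => h₁.2.1 t ht1 (by omega)

theorem exists_comb_of_mem_poleOrderPairs {S : Finset ℂ} {ord : ℂ → ℕ}
    (hS : ∀ ξ ∈ S, IsSystemPoleOrd E Φ F m ξ (ord ξ)) {p : ℂ × ℕ}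
    (hp : p ∈ poleOrderPairs S ord) :
    0 < p.2 ∧ ∃ g, IsCombExt E F m g ∧ HoloExceptPole E Φ g p.1 p.2 := by
  obtain ⟨hpS, hp1, hpord⟩ := mem_poleOrderPairs.1 hp
  exact ⟨hp1, (hS p.1 hpS).2.1 p.2 hp1 hpord⟩

theorem sum_ord_le_of_isSystemPoleOrd (hE : IsClosed E) (hΦ : IsExtConfMap E Φ)
    (hF : ∀ i, HoloNhd E (F i)) {S : Finset ℂ} {ord : ℂ → ℕ}
    (hS : ∀ ξ ∈ S, IsSystemPoleOrd E Φ F m ξ (ord ξ)) : ∑ ξ ∈ S, ord ξ ≤ ∑ i, m i :=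
  card_poleOrderPairs S ord ▸ card_le_sum_of_forall_exists_comb hE hΦ hF _
    fun _ hp => exists_comb_of_mem_poleOrderPairs hS hp

theorem HasExactlySysPoles.not_exists_comb_of_lt (hE : IsClosed E) (hΦ : IsExtConfMap E Φ)
    (hF : ∀ i, HoloNhd E (F i)) (hexact : HasExactlySysPoles E Φ F m (∑ i, m i)) {ξ : ℂ}
    {τ s : ℕ} (hτ : IsSystemPoleOrd E Φ F m ξ τ) (hτs : τ < s) :
    ¬ ∃ g, IsCombExt E F m g ∧ HoloExceptPole E Φ g ξ s := by
  rintro ⟨g, hg, hgpole⟩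
  obtain ⟨S, ord, ⟨hSiff, hS⟩, hsum⟩ := hexact
  have hξS : ξ ∈ S := (hSiff ξ).2 ⟨τ, hτ⟩
  have hnew : (ξ, s) ∉ poleOrderPairs S ord := fun hmem => by
    have := (mem_poleOrderPairs.1 hmem).2.2
    rw [(hS ξ hξS).unique hτ] at this
    omega
  have hcard := card_le_sum_of_forall_exists_comb hE hΦ hF (insert (ξ, s) (poleOrderPairs S ord))
    (Finset.forall_mem_insert _ _ _ |>.2 ⟨⟨hτ.1.trans hτs, g, hg, hgpole⟩,
      fun _ hp => exists_comb_of_mem_poleOrderPairs hS hp⟩)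
  rw [Finset.card_insert_of_notMem hnew, card_poleOrderPairs, hsum] at hcard
  omega

end SystemPoles

theorem stmt_11_general {ι : Type*} [Fintype ι] (E : Set ℂ) (hEc : IsCompact E)
    (Φ : ℂ → ℂ) (hΦ : IsExtConfMap E Φ)
    (F : ι → ℂ → ℂ) (hF : ∀ i, HoloNhd E (F i))
    (m : ι → ℕ) :
    (∀ (S : Finset ℂ) (ord : ℂ → ℕ),
      (∀ ξ ∈ S, IsSystemPoleOrd E Φ F m ξ (ord ξ)) →
      ∑ ξ ∈ S, ord ξ ≤ ∑ i, m i) ∧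
    (HasExactlySysPoles E Φ F m (∑ i, m i) →
      ∀ ξ τ, IsSystemPoleOrd E Φ F m ξ τ → ∀ s, τ < s →
        ¬ ∃ g, IsCombExt E F m g ∧ HoloExceptPole E Φ g ξ s) :=
  ⟨fun _ _ hS => sum_ord_le_of_isSystemPoleOrd hEc.isClosed hΦ hF hS,
    fun hexact _ _ hτ _ hτs => hexact.not_exists_comb_of_lt hEc.isClosed hΦ hF hτ hτs⟩

/-- Lemma 3.8 : at most `|m|` system poles; in case of exactly `|m|`
system poles no polynomial combination has a pole of higher order. -/
theorem stmt_11 {ι : Type*} [Fintype ι] (E : Set ℂ) (hEc : IsCompact E)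
    (hEinf : E.Infinite)
    (hEsc : SimplyConnectedSpace ↥((((↑) : ℂ → OnePoint ℂ) '' E)ᶜ))
    (Φ : ℂ → ℂ) (hΦ : IsExtConfMap E Φ)
    (F : ι → ℂ → ℂ) (hF : ∀ i, HoloNhd E (F i))
    (m : ι → ℕ) (hm : ∀ i, 1 ≤ m i) :
    (∀ (S : Finset ℂ) (ord : ℂ → ℕ),
      (∀ ξ ∈ S, IsSystemPoleOrd E Φ F m ξ (ord ξ)) →
      ∑ ξ ∈ S, ord ξ ≤ ∑ i, m i) ∧
    (HasExactlySysPoles E Φ F m (∑ i, m i) →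
      ∀ ξ τ, IsSystemPoleOrd E Φ F m ξ τ → ∀ s, τ < s →
        ¬ ∃ g, IsCombExt E F m g ∧ HoloExceptPole E Φ g ξ s) :=
  stmt_11_general E hEc Φ hΦ F hF m

end
end
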